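/- arXiv:2310.18106 — 5 statements merged into one kernel-verified Lean document; each statement's English description precedes it below -/
import Mathlib

section
/- For every a > 0, the second moment of the density g_a(x) = (a/(1-x)²) e^{-a x/(1-x)} on (0,1) satisfies γ₂(a) = ∫₀¹ x² g_a(x) dx = 1 + a - a(2+a) e^a E₁(a). -/
open Real MeasureTheory

noncomputable def E1 (a : ℝ) : ℝ := ∫ t in Set.Ioi a, Real.exp (-t) / t

/-!
The substitution `u = a / (1 - x)` maps `(0, 1)` onto `(a, ∞)`, turns `g_a(x) dx` into
`e^a e^{-u} du` and `x` into `1 - a / u`. Expanding `(1 - a / u)²`, the `1/u` term gives `E₁(a)`,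
and the `1/u²` term reduces to `e^{-a}/a - E₁(a)` by integrating `-(e^{-u}/u)' = e^{-u}/u + e^{-u}/u²`.
-/

open Set Filter Topology

theorem integrableOn_exp_neg_div_pow_Ioi {a : ℝ} (ha : 0 < a) (n : ℕ) :
    IntegrableOn (fun u => exp (-u) / u ^ n) (Ioi a) := by
  refine ((exp_neg_integrableOn_Ioi a one_pos).mul_const (a ^ n)⁻¹).mono'
    (by fun_prop : Measurable _).aestronglyMeasurable ?_
  filter_upwards [ae_restrict_mem measurableSet_Ioi] with u (hu : a < u)
  have hu0 : 0 < u := ha.trans hu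
  rw [norm_of_nonneg (by positivity), neg_one_mul, div_eq_mul_inv]
  gcongr

theorem integral_exp_neg_div_sq_Ioi {a : ℝ} (ha : 0 < a) :
    ∫ u in Ioi a, exp (-u) / u ^ 2 = exp (-a) / a - E1 a := by
  have hderiv : ∀ u ∈ Ici a, HasDerivAt (fun u => -(exp (-u) / u))
      (exp (-u) / u ^ 1 + exp (-u) / u ^ 2) u := by
    intro u (hu : a ≤ u)
    have hu0 : u ≠ 0 := (ha.trans_le hu).ne'
    refine (((hasDerivAt_neg u).exp).div (hasDerivAt_id u) hu0).neg.congr_deriv ?_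
    simp only [id]
    field_simp
    ring
  have hlim : Tendsto (fun u => -(exp (-u) / u)) atTop (𝓝 0) := by
    simpa using (tendsto_exp_neg_atTop_nhds_zero.div_atTop tendsto_id).neg
  have hI := integrableOn_exp_neg_div_pow_Ioi ha
  have hftc := integral_Ioi_of_hasDerivAt_of_tendsto' hderiv ((hI 1).add (hI 2)) hlim
  rw [integral_add (hI 1) (hI 2)] at hftc
  simp only [pow_one] at hftc
  rw [E1]
  linarith

theorem image_div_one_sub_Ioo_zero_one {a : ℝ} (ha : 0 < a) :
    (fun x => a / (1 - x)) '' Ioo 0 1 = Ioi a := by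
  ext u
  constructor
  · rintro ⟨x, ⟨hx0, hx1⟩, rfl⟩
    rw [mem_Ioi, lt_div_iff₀ (by linarith)]
    nlinarith
  · intro (hu : a < u)
    have hu0 : 0 < u := ha.trans hu
    refine ⟨1 - a / u, ⟨?_, ?_⟩, ?_⟩
    · rw [sub_pos, div_lt_one hu0]; exact hu
    · linarith [div_pos ha hu0]
    · field_simp [ha.ne']; ring

theorem integral_Ioo_zero_one_comp_div_one_sub {E : Type*} [NormedAddCommGroup E]
    [NormedSpace ℝ E] {a : ℝ} (ha : 0 < a) (g : ℝ → E) :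
    ∫ x in Ioo 0 1, (a / (1 - x) ^ 2) • g (a / (1 - x)) = ∫ u in Ioi a, g u := by
  have hderiv : ∀ x ∈ Ioo (0 : ℝ) 1,
      HasDerivWithinAt (fun x => a / (1 - x)) (a / (1 - x) ^ 2) (Ioo 0 1) x := by
    intro x ⟨_, hx1⟩
    refine ((((hasDerivAt_id x).const_sub 1).inv (by simp; linarith)).const_mul a
      |>.hasDerivWithinAt).congr_deriv ?_
    simp only [id]
    ring
  have hinj : InjOn (fun x => a / (1 - x)) (Ioo 0 1) := by
    intro x _ y _ hxy
    simpa [div_eq_mul_inv, ha.ne'] using hxy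
  rw [← image_div_one_sub_Ioo_zero_one ha,
    integral_image_eq_integral_abs_deriv_smul measurableSet_Ioo hderiv hinj]
  refine setIntegral_congr_fun measurableSet_Ioo fun x _ => ?_
  rw [abs_of_nonneg (by positivity)]

theorem integral_one_sub_div_sq_mul_exp_neg_Ioi {a : ℝ} (ha : 0 < a) :
    ∫ u in Ioi a, (1 - a / u) ^ 2 * exp (-u) = (1 + a) * exp (-a) - a * (2 + a) * E1 a := by
  have hI := integrableOn_exp_neg_div_pow_Ioi ha
  have hexpand : EqOn (fun u => (1 - a / u) ^ 2 * exp (-u))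
      (fun u => exp (-u) / u ^ 0 - 2 * a * (exp (-u) / u ^ 1) + a ^ 2 * (exp (-u) / u ^ 2))
      (Ioi a) := by
    intro u (hu : a < u)
    have hu0 : u ≠ 0 := (ha.trans hu).ne'
    field_simp
    ring
  rw [setIntegral_congr_fun measurableSet_Ioi hexpand,
    integral_add ?_ ((hI 2).const_mul _),
    integral_sub (hI 0) ((hI 1).const_mul _), integral_const_mul, integral_const_mul,
    integral_exp_neg_div_sq_Ioi ha]
  simp only [pow_zero, div_one, pow_one, integral_exp_neg_Ioi]
  · rw [E1]
    field_simp
    ring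
  · exact (hI 0).sub ((hI 1).const_mul _)

theorem gamma2_eq (a : ℝ) (ha : 0 < a) :
    ∫ x in (0:ℝ)..1, x ^ 2 * ((a / (1 - x) ^ 2) * Real.exp (-a * x / (1 - x)))
      = 1 + a - a * (2 + a) * Real.exp a * E1 a := by
  set g : ℝ → ℝ := fun u => exp a * ((1 - a / u) ^ 2 * exp (-u)) with hg
  have hsubst : EqOn (fun x => x ^ 2 * ((a / (1 - x) ^ 2) * exp (-a * x / (1 - x))))
      (fun x => (a / (1 - x) ^ 2) • g (a / (1 - x))) (Ioo 0 1) := by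
    intro x ⟨_, hx1⟩
    have hx : 1 - x ≠ 0 := by linarith
    have hexp : exp a * exp (-(a / (1 - x))) = exp (-a * x / (1 - x)) := by
      rw [← exp_add]; congr 1; field_simp; ring
    have hx' : 1 - a / (a / (1 - x)) = x := by field_simp [ha.ne']; ring
    simp only [hg, smul_eq_mul, hx', ← hexp]
    ring
  rw [intervalIntegral.integral_of_le zero_le_one, integral_Ioc_eq_integral_Ioo,
    setIntegral_congr_fun measurableSet_Ioo hsubst, integral_Ioo_zero_one_comp_div_one_sub ha,
    hg, integral_const_mul, integral_one_sub_div_sq_mul_exp_neg_Ioi ha, exp_neg]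
  field_simp
end

section
/- The function γ₁(a) = 1 - a e^a E₁(a) is strictly decreasing on (0, ∞), with γ₁(a) → 1 as a → 0⁺ and γ₁(a) → 0 as a → ∞. -/
open Real MeasureTheory Filter

noncomputable def gamma1 (a : ℝ) : ℝ := 1 - a * Real.exp a * E1 a

/-
Substituting `t = a + s` gives `a e^a E₁(a) = ∫₀^∞ e^{-s} · a / (a + s) ds`, the mean of
`a / (a + S)` for an exponentially distributed `S`. The ratio `a / (a + s)` lies in `[0, 1]`,
increases strictly in `a`, and tends to `0` as `a → 0⁺` and to `1` as `a → ∞`; strict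
monotonicity passes to the integral, and bounded convergence gives the two limits.
-/

open Set Topology

theorem integral_lt_integral_of_ae_lt {X : Type*} [MeasurableSpace X] {μ : Measure X}
    {f g : X → ℝ} (hμ : μ ≠ 0) (hf : Integrable f μ) (hg : Integrable g μ)
    (hfg : ∀ᵐ x ∂μ, f x < g x) : ∫ x, f x ∂μ < ∫ x, g x ∂μ := by
  have hsupp : μ univ ≤ μ (Function.support (g - f)) :=
    measure_mono_ae <| hfg.mono fun x hx _ => sub_ne_zero.2 hx.ne'
  have hpos : 0 < ∫ x, (g - f) x ∂μ :=
    (integral_pos_iff_support_of_nonneg_ae (hfg.mono fun x hx => (sub_pos.2 hx).le)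
      (hg.sub hf)).2 ((Measure.measure_univ_pos.2 hμ).trans_le hsupp)
  rw [Pi.sub_def, integral_sub hg hf] at hpos
  linarith

theorem setIntegral_comp_add_right_Ioi {E : Type*} [NormedAddCommGroup E] [NormedSpace ℝ E]
    (g : ℝ → E) (a : ℝ) : ∫ s in Ioi 0, g (s + a) = ∫ t in Ioi a, g t := by
  rw [← (measurePreserving_add_right volume a).setIntegral_preimage_emb
    (measurableEmbedding_addRight a) g (Ioi a)]
  congr 1
  ext s
  simp

theorem integrableOn_exp_neg_mul_of_norm_le {g : ℝ → ℝ} {C : ℝ}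
    (hg : AEStronglyMeasurable g (volume.restrict (Ioi 0)))
    (hgC : ∀ s ∈ Ioi (0 : ℝ), ‖g s‖ ≤ C) :
    IntegrableOn (fun s => exp (-s) * g s) (Ioi 0) :=
  (integrableOn_exp_neg_Ioi 0).mul_bdd hg
    ((ae_restrict_iff' measurableSet_Ioi).2 (.of_forall hgC))

theorem tendsto_setIntegral_exp_neg_mul {ι : Type*} {l : Filter ι} [l.IsCountablyGenerated]
    {g : ι → ℝ → ℝ} {g₀ : ℝ → ℝ} {C : ℝ}
    (hg : ∀ᶠ i in l, AEStronglyMeasurable (g i) (volume.restrict (Ioi 0)))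
    (hgC : ∀ᶠ i in l, ∀ s ∈ Ioi (0 : ℝ), ‖g i s‖ ≤ C)
    (hlim : ∀ s ∈ Ioi (0 : ℝ), Tendsto (fun i => g i s) l (𝓝 (g₀ s))) :
    Tendsto (fun i => ∫ s in Ioi 0, exp (-s) * g i s) l
      (𝓝 (∫ s in Ioi 0, exp (-s) * g₀ s)) := by
  refine tendsto_integral_filter_of_dominated_convergence (fun s => exp (-s) * C)
    (hg.mono fun i hi => (continuous_exp.comp continuous_neg).aestronglyMeasurable.mul hi)
    (hgC.mono fun i hi => (ae_restrict_iff' measurableSet_Ioi).2 (.of_forall fun s hs => ?_))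
    ((integrableOn_exp_neg_Ioi 0).mul_const C)
    ((ae_restrict_iff' measurableSet_Ioi).2 (.of_forall fun s hs => (hlim s hs).const_mul _))
  rw [norm_mul, norm_of_nonneg (exp_pos _).le]
  exact mul_le_mul_of_nonneg_left (hi s hs) (exp_pos _).le

theorem norm_div_add_le_one {a s : ℝ} (ha : 0 ≤ a) (hs : 0 ≤ s) : ‖a / (a + s)‖ ≤ 1 := by
  rw [norm_of_nonneg (by positivity)]
  exact div_le_one_of_le₀ (le_add_of_nonneg_right hs) (by positivity)

theorem strictMonoOn_div_add_const {s : ℝ} (hs : 0 < s) :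
    StrictMonoOn (fun a => a / (a + s)) (Ici 0) := by
  intro a ha b hb hab
  have ha' : (0 : ℝ) ≤ a := ha
  rw [div_lt_div_iff₀ (by positivity) (by linarith)]
  nlinarith

theorem tendsto_div_add_const_atTop (s : ℝ) :
    Tendsto (fun a => a / (a + s)) atTop (𝓝 1) := by
  have h : Tendsto (fun a => 1 - s / (a + s)) atTop (𝓝 (1 - 0)) :=
    tendsto_const_nhds.sub <|
      tendsto_const_nhds.div_atTop (tendsto_atTop_add_const_right _ s tendsto_id)
  rw [sub_zero] at h
  refine h.congr' ?_
  filter_upwards [eventually_gt_atTop (-s)] with a ha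
  field_simp [(by linarith : a + s ≠ 0)]
  ring

theorem measurable_div_add_const (a : ℝ) : Measurable fun s : ℝ => a / (a + s) := by
  fun_prop

noncomputable def expRatioMean (a : ℝ) : ℝ := ∫ s in Ioi 0, exp (-s) * (a / (a + s))

theorem gamma1_eq_one_sub_expRatioMean (a : ℝ) : gamma1 a = 1 - expRatioMean a := by
  rw [gamma1, E1, ← setIntegral_comp_add_right_Ioi, ← integral_const_mul, expRatioMean]
  congr 2 with s
  have hexp : exp a * exp (-(s + a)) = exp (-s) := by rw [← exp_add]; ring_nf
  rw [add_comm a s, ← hexp]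
  ring

theorem strictMonoOn_expRatioMean : StrictMonoOn expRatioMean (Ioi 0) := by
  intro a ha b hb hab
  have hint {c : ℝ} (hc : 0 < c) : IntegrableOn (fun s => exp (-s) * (c / (c + s))) (Ioi 0) :=
    integrableOn_exp_neg_mul_of_norm_le (measurable_div_add_const c).aestronglyMeasurable
      fun s hs => norm_div_add_le_one hc.le (le_of_lt hs)
  refine integral_lt_integral_of_ae_lt (by simp) (hint ha) (hint hb)
    ((ae_restrict_iff' measurableSet_Ioi).2 (.of_forall fun s (hs : 0 < s) => ?_))
  have hratio := strictMonoOn_div_add_const hs (Ioi_subset_Ici_self ha) (Ioi_subset_Ici_self hb) hab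
  exact mul_lt_mul_of_pos_left hratio (exp_pos _)

theorem tendsto_expRatioMean_nhdsGT_zero : Tendsto expRatioMean (𝓝[>] 0) (𝓝 0) := by
  have h := tendsto_setIntegral_exp_neg_mul (l := 𝓝[>] 0) (g₀ := 0) (C := 1)
    (.of_forall fun a => (measurable_div_add_const a).aestronglyMeasurable)
    (eventually_nhdsWithin_of_forall fun a ha s hs =>
      norm_div_add_le_one (le_of_lt ha) (le_of_lt hs))
    fun s (hs : 0 < s) => ?_
  · simp only [Pi.zero_apply, mul_zero, integral_zero] at h
    exact h
  · have hc : ContinuousAt (fun a => a / (a + s)) 0 :=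
      continuousAt_id.div (continuousAt_id.add continuousAt_const) (by simp [hs.ne'])
    simpa using hc.tendsto.mono_left nhdsWithin_le_nhds

theorem tendsto_expRatioMean_atTop : Tendsto expRatioMean atTop (𝓝 1) := by
  have h := tendsto_setIntegral_exp_neg_mul (l := atTop) (g₀ := 1) (C := 1)
    (.of_forall fun a => (measurable_div_add_const a).aestronglyMeasurable)
    ((eventually_ge_atTop 0).mono fun a ha s hs => norm_div_add_le_one ha (le_of_lt hs))
    fun s _ => tendsto_div_add_const_atTop s
  simp only [Pi.one_apply, mul_one, integral_exp_neg_Ioi_zero] at h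
  exact h

theorem gamma1_strictAnti_and_limits :
    StrictAntiOn gamma1 (Set.Ioi 0) ∧
    Tendsto gamma1 (nhdsWithin 0 (Set.Ioi 0)) (nhds 1) ∧
    Tendsto gamma1 atTop (nhds 0) := by
  have hγ : gamma1 = fun a => 1 - expRatioMean a := funext gamma1_eq_one_sub_expRatioMean
  refine ⟨?_, ?_, ?_⟩
  · intro a ha b hb hab
    rw [hγ]
    exact sub_lt_sub_left (strictMonoOn_expRatioMean ha hb hab) 1
  · simpa [hγ] using tendsto_expRatioMean_nhdsGT_zero.const_sub 1
  · simpa [hγ] using tendsto_expRatioMean_atTop.const_sub 1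
end

section
/- For all a > 0, the exponential integral satisfies the two-sided bound (1/2) e^{-a} ln(1 + 2/a) < E₁(a) < e^{-a} ln(1 + 1/a). -/
open Real MeasureTheory

/-! For `c > 0`, `-d/dt [e⁻ᵗ log (1 + c/t)] = e⁻ᵗ (log (1 + c/t) + c/(t(t + c)))`, whose integral
over `(a, ∞)` is `e⁻ᵃ log (1 + c/a)`. Both bounds compare `e⁻ᵗ/t` with this integrand pointwise:
for `c = 1`, `log (1 + 1/t) > 1/(t + 1)` makes it the larger one; for `c = 2`, half of it is the
smaller one by `log s < sinh (log s) = (s - s⁻¹)/2` at `s = 1 + 2/t`. -/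

open Set Filter Topology

theorem MeasureTheory.setIntegral_lt_setIntegral_of_forall_lt {X : Type*} [MeasurableSpace X]
    {μ : Measure X} {s : Set X} {f g : X → ℝ} (hs : MeasurableSet s) (hμs : μ s ≠ 0)
    (hf : IntegrableOn f s μ) (hg : IntegrableOn g s μ) (hlt : ∀ x ∈ s, f x < g x) :
    ∫ x in s, f x ∂μ < ∫ x in s, g x ∂μ := by
  rw [← sub_pos, ← integral_sub hg hf, setIntegral_pos_iff_support_of_nonneg_ae
    (ae_restrict_of_forall_mem hs fun x hx => (sub_pos.2 (hlt x hx)).le) (hg.sub hf)]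
  have hsupp : Function.support (fun x => g x - f x) ∩ s = s :=
    inter_eq_right.2 fun x hx => (sub_pos.2 (hlt x hx)).ne'
  rw [hsupp]
  exact pos_iff_ne_zero.2 hμs

namespace Real

theorem one_sub_inv_lt_log {s : ℝ} (hs₀ : 0 < s) (hs₁ : s ≠ 1) : 1 - s⁻¹ < log s := by
  have := log_lt_sub_one_of_pos (inv_pos.2 hs₀) (inv_ne_one.2 hs₁)
  rw [log_inv] at this
  linarith

theorem log_lt_sub_inv_div_two {s : ℝ} (hs : 1 < s) : log s < (s - s⁻¹) / 2 := by
  rw [← sinh_log (zero_lt_one.trans hs)]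
  exact self_lt_sinh_iff.2 (log_pos hs)

theorem hasDerivAt_neg_exp_neg_mul_log_one_add_div {c t : ℝ} (hc : 0 < c) (ht : 0 < t) :
    HasDerivAt (fun x => -(exp (-x) * log (1 + c / x)))
      (exp (-t) * (log (1 + c / t) + c / (t * (t + c)))) t := by
  have hexp : HasDerivAt (fun x => exp (-x)) (-exp (-t)) t := by
    simpa using (hasDerivAt_neg t).exp
  have hlog : HasDerivAt (fun x => log (1 + c / x)) ((1 + c / t)⁻¹ * -(c / t ^ 2)) t := by
    refine ((hasDerivAt_const t c).div (hasDerivAt_id t) ht.ne').const_add 1 |>.log ?_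
      |>.congr_deriv ?_
    · simp only [Pi.div_apply, id]; positivity
    · simp only [id_eq, zero_mul, mul_one, zero_sub, Pi.div_apply, mul_neg]; ring
  refine (hexp.mul hlog).neg.congr_deriv ?_
  field_simp
  ring

theorem tendsto_exp_neg_mul_log_one_add_div_atTop (c : ℝ) :
    Tendsto (fun x => exp (-x) * log (1 + c / x)) atTop (𝓝 0) := by
  have hlog : Tendsto (fun x => log (1 + c / x)) atTop (𝓝 0) := by
    simpa using ((tendsto_const_nhds.div_atTop tendsto_id).const_add 1).log (by norm_num)
  simpa using tendsto_exp_neg_atTop_nhds_zero.mul hlog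

theorem integrableOn_Ioi_exp_neg_mul_log_one_add_div {c a : ℝ} (hc : 0 < c) (ha : 0 < a) :
    IntegrableOn (fun t => exp (-t) * (log (1 + c / t) + c / (t * (t + c)))) (Ioi a) := by
  refine integrableOn_Ioi_deriv_of_nonneg'
    (fun t ht => hasDerivAt_neg_exp_neg_mul_log_one_add_div hc (ha.trans_le ht)) (fun t ht => ?_)
    (by simpa using (tendsto_exp_neg_mul_log_one_add_div_atTop c).neg)
  have ht0 : 0 < t := ha.trans ht
  have : 0 < log (1 + c / t) := log_pos (by simpa using div_pos hc ht0)
  positivity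

theorem integral_Ioi_exp_neg_mul_log_one_add_div {c a : ℝ} (hc : 0 < c) (ha : 0 < a) :
    ∫ t in Ioi a, exp (-t) * (log (1 + c / t) + c / (t * (t + c))) =
      exp (-a) * log (1 + c / a) := by
  rw [integral_Ioi_of_hasDerivAt_of_tendsto'
    (fun t ht => hasDerivAt_neg_exp_neg_mul_log_one_add_div hc (ha.trans_le ht))
    (integrableOn_Ioi_exp_neg_mul_log_one_add_div hc ha)
    (by simpa using (tendsto_exp_neg_mul_log_one_add_div_atTop c).neg), zero_sub, neg_neg]

theorem exp_neg_div_lt_exp_neg_mul_log_one_add_one_div {t : ℝ} (ht : 0 < t) :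
    exp (-t) / t < exp (-t) * (log (1 + 1 / t) + 1 / (t * (t + 1))) := by
  have hlog := one_sub_inv_lt_log (show 0 < 1 + 1 / t by positivity) (by simp [ht.ne'])
  have hsplit : 1 / t = 1 - (1 + 1 / t)⁻¹ + 1 / (t * (t + 1)) := by field_simp; ring
  rw [div_eq_mul_one_div]
  exact mul_lt_mul_of_pos_left (by linarith) (exp_pos _)

theorem exp_neg_mul_log_one_add_two_div_lt_exp_neg_div {t : ℝ} (ht : 0 < t) :
    exp (-t) * (log (1 + 2 / t) + 2 / (t * (t + 2))) / 2 < exp (-t) / t := by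
  have hlog := log_lt_sub_inv_div_two (show 1 < 1 + 2 / t by simpa using ht)
  have hsplit : 1 / t = (1 + 2 / t - (1 + 2 / t)⁻¹) / 4 + 2 / (t * (t + 2)) / 2 := by
    field_simp; ring
  rw [mul_div_assoc, div_eq_mul_one_div (exp (-t))]
  exact mul_lt_mul_of_pos_left (by linarith) (exp_pos _)

theorem integrableOn_Ioi_exp_neg_div {a : ℝ} (ha : 0 < a) :
    IntegrableOn (fun t => exp (-t) / t) (Ioi a) :=
  (integrableOn_Ioi_exp_neg_mul_log_one_add_div one_pos ha).mono'
    (by fun_prop : Measurable fun t => exp (-t) / t).aestronglyMeasurable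
    (ae_restrict_of_forall_mem measurableSet_Ioi fun t ht => by
      have ht0 : 0 < t := ha.trans ht
      rw [norm_of_nonneg (by positivity)]
      exact (exp_neg_div_lt_exp_neg_mul_log_one_add_one_div ht0).le)

end Real

theorem E1_log_bounds (a : ℝ) (ha : 0 < a) :
    (1 / 2) * Real.exp (-a) * Real.log (1 + 2 / a) < E1 a ∧
    E1 a < Real.exp (-a) * Real.log (1 + 1 / a) := by
  have hvol : volume (Ioi a) ≠ 0 := by simp
  constructor
  · calc (1 / 2) * exp (-a) * log (1 + 2 / a)
        = ∫ t in Ioi a, exp (-t) * (log (1 + 2 / t) + 2 / (t * (t + 2))) / 2 := by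
          rw [integral_div, integral_Ioi_exp_neg_mul_log_one_add_div two_pos ha]; ring
      _ < E1 a := setIntegral_lt_setIntegral_of_forall_lt measurableSet_Ioi hvol
          ((integrableOn_Ioi_exp_neg_mul_log_one_add_div two_pos ha).div_const 2)
          (integrableOn_Ioi_exp_neg_div ha)
          fun t ht => exp_neg_mul_log_one_add_two_div_lt_exp_neg_div (ha.trans ht)
  · rw [← integral_Ioi_exp_neg_mul_log_one_add_div one_pos ha]
    exact setIntegral_lt_setIntegral_of_forall_lt measurableSet_Ioi hvol
      (integrableOn_Ioi_exp_neg_div ha) (integrableOn_Ioi_exp_neg_mul_log_one_add_div one_pos ha)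
      fun t ht => exp_neg_div_lt_exp_neg_mul_log_one_add_one_div (ha.trans ht)
end

section
/- The function γ(a) = a(1+a) e^a E₁(a) - a on (0, ∞) satisfies γ(a) → 0 as a → 0⁺ and γ(a) → 0 as a → ∞, and γ(a) > 0 for all a > 0; consequently γ attains a maximum at some interior point of (0, ∞). -/
open Real MeasureTheory Filter

noncomputable def gammaVar (a : ℝ) : ℝ := a * (1 + a) * Real.exp a * E1 a - a

/-
Jensen's inequality for the convex function `1 / t` against the probability density
`exp (a - t)` on `(a, ∞)`, whose mean is `1 + a`, gives `exp a * E1 a > 1 / (1 + a)`, that is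
`γ a > 0`; comparing `1 / t` with its quadratic Taylor polynomial at `a` gives
`γ a ≤ 1 / a + 2 / a ^ 2`, hence `γ a → 0` at infinity. Near `0`, `E1 a ≤ E1 1 - log a`, so
`a * E1 a → 0` and `γ a → 0`. A continuous positive function on `(0, ∞)` that tends to `0` at
both ends attains its maximum.
-/

open Set
open scoped Topology

lemma integrableOn_Ioi_pow_mul_exp_neg (n : ℕ) {a : ℝ} (ha : 0 ≤ a) :
    IntegrableOn (fun t => t ^ n * exp (-t)) (Ioi a) := by
  have := GammaIntegral_convergent (s := n + 1) (by positivity)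
  simp only [add_sub_cancel_right, rpow_natCast] at this
  simpa only [mul_comm] using this.mono_set (Ioi_subset_Ioi ha)

lemma integrableOn_Ioi_quadratic_mul_exp_neg (α β γ : ℝ) {a : ℝ} (ha : 0 ≤ a) :
    IntegrableOn (fun t => (α + β * t + γ * t ^ 2) * exp (-t)) (Ioi a) := by
  have I := fun n => integrableOn_Ioi_pow_mul_exp_neg n ha
  exact IntegrableOn.congr_fun ((((I 0).const_mul α).add ((I 1).const_mul β)).add
    ((I 2).const_mul γ)) (fun t _ => by simp only [Pi.add_apply]; ring) measurableSet_Ioi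

lemma tendsto_quadratic_mul_exp_neg_atTop (α β γ : ℝ) :
    Tendsto (fun t => (α + β * t + γ * t ^ 2) * exp (-t)) atTop (𝓝 0) := by
  have T := tendsto_pow_mul_exp_neg_atTop_nhds_zero
  simpa using (((T 0).const_mul α).add ((T 1).const_mul β)).add ((T 2).const_mul γ) |>.congr
    (fun t => by ring)

lemma integral_Ioi_quadratic_mul_exp_neg (α β γ : ℝ) {a : ℝ} (ha : 0 ≤ a) :
    ∫ t in Ioi a, (α + β * t + γ * t ^ 2) * exp (-t) =
      (α + β + 2 * γ + (β + 2 * γ) * a + γ * a ^ 2) * exp (-a) := by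
  have hderiv (t : ℝ) : HasDerivAt
      (fun t => -((α + β + 2 * γ + (β + 2 * γ) * t + γ * t ^ 2) * exp (-t)))
      ((α + β * t + γ * t ^ 2) * exp (-t)) t := by
    have hP : HasDerivAt (fun t => α + β + 2 * γ + (β + 2 * γ) * t + γ * t ^ 2)
        (β + 2 * γ + 2 * γ * t) t :=
      ((((hasDerivAt_id' t).const_mul (β + 2 * γ)).const_add (α + β + 2 * γ)).fun_add
        ((hasDerivAt_pow 2 t).const_mul γ)).congr_deriv (by push_cast; ring)
    exact (hP.fun_mul (hasDerivAt_neg' t).exp).fun_neg.congr_deriv (by ring)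
  rw [integral_Ioi_of_hasDerivAt_of_tendsto' (fun t _ => hderiv t)
    (integrableOn_Ioi_quadratic_mul_exp_neg α β γ ha)
    (by simpa using (tendsto_quadratic_mul_exp_neg_atTop _ _ γ).neg)]
  ring

lemma setIntegral_Ioi_pos {f : ℝ → ℝ} {a b : ℝ} (hf : IntegrableOn f (Ioi a))
    (hnonneg : ∀ t > a, 0 ≤ f t) (hpos : ∀ t > b, 0 < f t) : 0 < ∫ t in Ioi a, f t := by
  rw [setIntegral_pos_iff_support_of_nonneg_ae
    (ae_restrict_of_forall_mem measurableSet_Ioi hnonneg) hf]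
  calc (0 : ENNReal) < volume (Ioi (max a b)) := by simp
    _ ≤ volume (Function.support f ∩ Ioi a) := measure_mono fun t ht =>
      ⟨(hpos t ((le_max_right a b).trans_lt ht)).ne', (le_max_left a b).trans_lt ht⟩

lemma exists_isMaxOn_Ioi_of_tendsto {f : ℝ → ℝ} {b L x₀ : ℝ} (hf : ContinuousOn f (Ioi b))
    (hb : Tendsto f (𝓝[>] b) (𝓝 L)) (htop : Tendsto f atTop (𝓝 L)) (hx₀ : b < x₀)
    (hL : L < f x₀) : ∃ a ∈ Ioi b, IsMaxOn f (Ioi b) a := by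
  obtain ⟨u, hu, hnear⟩ := mem_nhdsGT_iff_exists_Ioo_subset.1 (hb.eventually_lt_const hL)
  obtain ⟨M, hfar⟩ := eventually_atTop.1 (htop.eventually_lt_const hL)
  have hK : Icc (min u x₀) (max M x₀) ⊆ Ioi b := fun x hx => (lt_min hu hx₀).trans_le hx.1
  have hx₀K : x₀ ∈ Icc (min u x₀) (max M x₀) := ⟨min_le_right _ _, le_max_right _ _⟩
  obtain ⟨a, haK, hmax⟩ := isCompact_Icc.exists_isMaxOn ⟨x₀, hx₀K⟩ (hf.mono hK)
  refine ⟨a, hK haK, fun x hx => ?_⟩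
  by_cases hxK : x ∈ Icc (min u x₀) (max M x₀)
  · exact hmax hxK
  have hlt : f x < f x₀ := by
    rcases not_and_or.1 hxK with h | h
    · exact hnear ⟨hx, (not_le.1 h).trans_le (min_le_left _ _)⟩
    · exact hfar x ((le_max_left _ _).trans (not_le.1 h).le)
  exact hlt.le.trans (hmax hx₀K)

lemma continuousOn_exp_neg_div_self : ContinuousOn (fun t => exp (-t) / t) (Ioi 0) :=
  fun t ht => by fun_prop (disch := exact (ne_of_gt ht))

lemma integrableOn_Ioi_exp_neg_div_self {a : ℝ} (ha : 0 < a) :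
    IntegrableOn (fun t => exp (-t) / t) (Ioi a) := by
  refine Integrable.mono' ((integrableOn_Ioi_pow_mul_exp_neg 0 ha.le).div_const a)
    ((continuousOn_exp_neg_div_self.mono (Ioi_subset_Ioi ha.le)).aestronglyMeasurable
      measurableSet_Ioi) ?_
  filter_upwards [ae_restrict_mem measurableSet_Ioi] with t ht
  rw [norm_of_nonneg (div_nonneg (exp_pos _).le (ha.trans ht).le), pow_zero, one_mul]
  gcongr
  exact ht.le

lemma E1_sub_E1 {a b : ℝ} (ha : 0 < a) (hb : 0 < b) :
    E1 a - E1 b = ∫ t in a..b, exp (-t) / t :=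
  intervalIntegral.integral_Ioi_sub_Ioi' (integrableOn_Ioi_exp_neg_div_self ha)
    (integrableOn_Ioi_exp_neg_div_self hb)

lemma intervalIntegrable_exp_neg_div_self {a b : ℝ} (ha : 0 < a) (hb : 0 < b) :
    IntervalIntegrable (fun t => exp (-t) / t) volume a b :=
  (continuousOn_exp_neg_div_self.mono fun _ ht => (lt_min ha hb).trans_le ht.1).intervalIntegrable

lemma hasDerivAt_E1 {a : ℝ} (ha : 0 < a) : HasDerivAt E1 (-(exp (-a) / a)) a := by
  have hint : HasDerivAt (fun x => ∫ t in (1 : ℝ)..x, exp (-t) / t) (exp (-a) / a) a :=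
    intervalIntegral.integral_hasDerivAt_right (intervalIntegrable_exp_neg_div_self one_pos ha)
      ((continuousOn_exp_neg_div_self.stronglyMeasurableAtFilter isOpen_Ioi) a ha)
      (continuousOn_exp_neg_div_self.continuousAt (Ioi_mem_nhds ha))
  refine (hint.const_sub (E1 1)).congr_of_eventuallyEq ?_
  filter_upwards [eventually_gt_nhds ha] with x hx
  linarith [E1_sub_E1 one_pos hx]

lemma inv_one_add_lt_exp_mul_E1 {a : ℝ} (ha : 0 < a) : 1 / (1 + a) < exp a * E1 a := by
  set c := 1 + a
  have hc0 : 0 < c := by positivity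
  have hac : a < c := by linarith
  have htangent : ∫ t in Ioi a, (2 / c + (-1 / c ^ 2) * t + 0 * t ^ 2) * exp (-t) =
      exp (-a) / c := by
    rw [integral_Ioi_quadratic_mul_exp_neg _ _ _ ha.le]
    field_simp
    ring
  -- `2 / c - t / c ^ 2` is the tangent line of `1 / t` at `c`
  have hgap (t : ℝ) (ht : 0 < t) :
      exp (-t) / t - (2 / c + (-1 / c ^ 2) * t + 0 * t ^ 2) * exp (-t) =
        exp (-t) * (t - c) ^ 2 / (c ^ 2 * t) := by
    field_simp
    ring
  have hpos : 0 < ∫ t in Ioi a,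
      (exp (-t) / t - (2 / c + (-1 / c ^ 2) * t + 0 * t ^ 2) * exp (-t)) := by
    refine setIntegral_Ioi_pos (b := c) ((integrableOn_Ioi_exp_neg_div_self ha).sub
      (integrableOn_Ioi_quadratic_mul_exp_neg _ _ _ ha.le)) (fun t ht => ?_) (fun t ht => ?_)
    · have ht0 : 0 < t := ha.trans ht
      rw [hgap t ht0]
      positivity
    · have ht0 : 0 < t := (ha.trans hac).trans ht
      have : 0 < (t - c) ^ 2 := pow_pos (sub_pos.2 ht) 2
      rw [hgap t ht0]
      positivity
  rw [integral_sub (integrableOn_Ioi_exp_neg_div_self ha)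
    (integrableOn_Ioi_quadratic_mul_exp_neg _ _ _ ha.le), htangent, ← E1] at hpos
  have := mul_lt_mul_of_pos_left (sub_pos.1 hpos) (exp_pos a)
  rwa [mul_div_assoc', ← exp_add, add_neg_cancel, exp_zero] at this

lemma exp_mul_E1_le {a : ℝ} (ha : 0 < a) : exp a * E1 a ≤ 1 / a - 1 / a ^ 2 + 2 / a ^ 3 := by
  -- `3 / a - 3 * t / a ^ 2 + t ^ 2 / a ^ 3` is the quadratic Taylor polynomial of `1 / t` at `a`
  have htaylor : ∫ t in Ioi a, (3 / a + (-3 / a ^ 2) * t + 1 / a ^ 3 * t ^ 2) * exp (-t) =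
      (1 / a - 1 / a ^ 2 + 2 / a ^ 3) * exp (-a) := by
    rw [integral_Ioi_quadratic_mul_exp_neg _ _ _ ha.le]
    field_simp
    ring
  have hle : E1 a ≤ ∫ t in Ioi a, (3 / a + (-3 / a ^ 2) * t + 1 / a ^ 3 * t ^ 2) * exp (-t) := by
    refine setIntegral_mono_on (integrableOn_Ioi_exp_neg_div_self ha)
      (integrableOn_Ioi_quadratic_mul_exp_neg _ _ _ ha.le) measurableSet_Ioi fun t ht => ?_
    have ht0 : 0 < t := ha.trans ht
    have hgap : (3 / a + (-3 / a ^ 2) * t + 1 / a ^ 3 * t ^ 2) * exp (-t) - exp (-t) / t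
        = exp (-t) * (t - a) ^ 3 / (a ^ 3 * t) := by
      field_simp
      ring
    have : 0 ≤ (t - a) ^ 3 := pow_nonneg (sub_nonneg.2 ht.le) 3
    have : 0 ≤ exp (-t) * (t - a) ^ 3 / (a ^ 3 * t) := by positivity
    linarith
  rw [htaylor] at hle
  have := mul_le_mul_of_nonneg_left hle (exp_pos a).le
  rwa [mul_left_comm, ← exp_add, add_neg_cancel, exp_zero, mul_one] at this

lemma E1_pos {a : ℝ} (ha : 0 < a) : 0 < E1 a :=
  pos_of_mul_pos_right ((by positivity : (0 : ℝ) < 1 / (1 + a)).trans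
    (inv_one_add_lt_exp_mul_E1 ha)) (exp_pos a).le

lemma E1_le_E1_one_sub_log {a : ℝ} (ha : 0 < a) (ha1 : a ≤ 1) : E1 a ≤ E1 1 - log a := by
  have hle : ∫ t in a..1, exp (-t) / t ≤ ∫ t in a..1, t⁻¹ := by
    refine intervalIntegral.integral_mono_on ha1 (intervalIntegrable_exp_neg_div_self ha one_pos)
      (intervalIntegral.intervalIntegrable_inv (fun t ht => ?_) continuousOn_id) fun t ht => ?_
    · rw [uIcc_of_le ha1] at ht
      exact (ha.trans_le ht.1).ne'
    · rw [div_eq_mul_inv]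
      exact mul_le_of_le_one_left (inv_nonneg.2 (ha.le.trans ht.1))
        (exp_le_one_iff.2 (by linarith [ht.1]))
  rw [integral_inv_of_pos ha one_pos, one_div, log_inv, ← E1_sub_E1 ha one_pos] at hle
  linarith

lemma gammaVar_eq (a : ℝ) : gammaVar a = a * (1 + a) * (exp a * E1 a) - a := by
  rw [gammaVar]; ring

lemma gammaVar_pos {a : ℝ} (ha : 0 < a) : 0 < gammaVar a := by
  have hlt := mul_lt_mul_of_pos_left (inv_one_add_lt_exp_mul_E1 ha)
    (by positivity : 0 < a * (1 + a))
  have hcancel : a * (1 + a) * (1 / (1 + a)) = a := by field_simp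
  rw [gammaVar_eq]
  linarith

lemma gammaVar_le {a : ℝ} (ha : 0 < a) : gammaVar a ≤ 1 / a + 2 / a ^ 2 := by
  have hle := mul_le_mul_of_nonneg_left (exp_mul_E1_le ha) (by positivity : 0 ≤ a * (1 + a))
  have hsimplify : a * (1 + a) * (1 / a - 1 / a ^ 2 + 2 / a ^ 3) - a = 1 / a + 2 / a ^ 2 := by
    field_simp; ring
  rw [gammaVar_eq]
  linarith

lemma tendsto_mul_E1_nhdsGT_zero : Tendsto (fun a => a * E1 a) (𝓝[>] 0) (𝓝 0) := by
  have hupper : Tendsto (fun a => a * E1 1 - a * log a) (𝓝[>] 0) (𝓝 0) := by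
    have hcont : Continuous fun a : ℝ => a * E1 1 - a * log a :=
      (continuous_id.mul continuous_const).sub continuous_mul_log
    exact (hcont.tendsto' 0 0 (by simp)).mono_left nhdsWithin_le_nhds
  refine tendsto_of_tendsto_of_tendsto_of_le_of_le' tendsto_const_nhds hupper ?_ ?_
  · filter_upwards [self_mem_nhdsWithin] with a ha
    exact mul_nonneg ha.le (E1_pos ha).le
  · filter_upwards [Ioo_mem_nhdsGT one_pos] with a ha
    rw [← mul_sub]
    exact mul_le_mul_of_nonneg_left (E1_le_E1_one_sub_log ha.1 ha.2.le) ha.1.le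

lemma tendsto_gammaVar_nhdsGT_zero : Tendsto gammaVar (𝓝[>] 0) (𝓝 0) := by
  have hfactor : Tendsto (fun a : ℝ => (1 + a) * exp a) (𝓝[>] 0) (𝓝 1) :=
    ((by fun_prop : Continuous fun a : ℝ => (1 + a) * exp a).tendsto' 0 1 (by simp))
      |>.mono_left nhdsWithin_le_nhds
  have := (hfactor.mul tendsto_mul_E1_nhdsGT_zero).sub
    (tendsto_id.mono_left nhdsWithin_le_nhds : Tendsto id (𝓝[>] (0 : ℝ)) (𝓝 0))
  simp only [mul_zero, sub_zero] at this
  exact this.congr fun a => by rw [gammaVar_eq]; simp only [id]; ring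

lemma tendsto_gammaVar_atTop : Tendsto gammaVar atTop (𝓝 0) := by
  have hupper : Tendsto (fun a : ℝ => 1 / a + 2 / a ^ 2) atTop (𝓝 0) := by
    have h := tendsto_inv_atTop_zero (𝕜 := ℝ)
    simpa [div_eq_mul_inv, inv_pow] using h.add ((h.pow 2).const_mul 2)
  refine tendsto_of_tendsto_of_tendsto_of_le_of_le' tendsto_const_nhds hupper ?_ ?_ <;>
    filter_upwards [eventually_gt_atTop 0] with a ha
  exacts [(gammaVar_pos ha).le, gammaVar_le ha]

lemma continuousOn_gammaVar : ContinuousOn gammaVar (Ioi 0) := fun a ha => by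
  have := (hasDerivAt_E1 ha).continuousAt
  unfold gammaVar
  fun_prop

theorem gammaVar_limits_pos_max :
    Tendsto gammaVar (nhdsWithin 0 (Set.Ioi 0)) (nhds 0) ∧
    Tendsto gammaVar atTop (nhds 0) ∧
    (∀ a : ℝ, 0 < a → 0 < gammaVar a) ∧
    ∃ a₀ : ℝ, 0 < a₀ ∧ ∀ a : ℝ, 0 < a → gammaVar a ≤ gammaVar a₀ := by
  refine ⟨tendsto_gammaVar_nhdsGT_zero, tendsto_gammaVar_atTop, fun a => gammaVar_pos, ?_⟩
  obtain ⟨a₀, ha₀, hmax⟩ := exists_isMaxOn_Ioi_of_tendsto continuousOn_gammaVar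
    tendsto_gammaVar_nhdsGT_zero tendsto_gammaVar_atTop one_pos (gammaVar_pos one_pos)
  exact ⟨a₀, ha₀, fun a ha => hmax ha⟩
end

section
/- Let ν > 0 and define V(τ) = (Θ α / s) · P · (ν e^ν E₁(ν) - ν e^{-sατ} e^{ν e^{-sατ}} E₁(ν e^{-sατ})) for constants Θ, α, s, P > 0. Then V is strictly increasing in τ ≥ 0 and V(τ) → (Θ α / s) P ν e^ν E₁(ν) as τ → ∞. -/
open Real MeasureTheory Filter Topology

/-!
Substituting `t = x + v` gives `x eˣ E₁(x) = ∫₀^∞ e^{-v} x / (x + v) dv`. The integrand is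
strictly increasing in `x`, dominated by `e^{-v}`, and tends to `0` pointwise as `x → 0⁺`, so
`x ↦ x eˣ E₁(x)` is strictly increasing on `(0, ∞)` and tends to `0` at `0⁺`. The theorem
follows because `ν e^{-sατ}` decreases strictly to `0⁺` as `τ → ∞`.
-/

lemma E1_eq_integral_add (x : ℝ) :
    E1 x = ∫ v in Set.Ioi (0 : ℝ), Real.exp (-(x + v)) / (x + v) := by
  calc E1 x = ∫ t in Set.Ioi x, Real.exp (-t) / t ∂(Measure.map (x + ·) volume) := by
        rw [(measurePreserving_add_left volume x).map_eq, E1]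
    _ = ∫ v in (x + ·) ⁻¹' Set.Ioi x, Real.exp (-(x + v)) / (x + v) :=
        (measurableEmbedding_addLeft x).setIntegral_map _ _
    _ = _ := by norm_num

lemma mul_exp_mul_E1_eq_integral {x : ℝ} (hx : 0 < x) :
    x * Real.exp x * E1 x = ∫ v in Set.Ioi (0 : ℝ), Real.exp (-v) * (x / (x + v)) := by
  rw [E1_eq_integral_add, ← integral_const_mul]
  refine setIntegral_congr_fun measurableSet_Ioi fun v (hv : 0 < v) => ?_
  have hxv : x + v ≠ 0 := by positivity
  rw [neg_add, Real.exp_add, Real.exp_neg x]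
  field_simp

lemma norm_exp_neg_mul_div_add_le {x v : ℝ} (hx : 0 ≤ x) (hv : 0 < v) :
    ‖Real.exp (-v) * (x / (x + v))‖ ≤ Real.exp (-v) := by
  have hle : x / (x + v) ≤ 1 := by rw [div_le_one (by positivity)]; linarith
  rw [Real.norm_of_nonneg (by positivity)]
  exact mul_le_of_le_one_right (Real.exp_pos _).le hle

lemma integrableOn_exp_neg_mul_div_add {x : ℝ} (hx : 0 < x) :
    IntegrableOn (fun v => Real.exp (-v) * (x / (x + v))) (Set.Ioi (0 : ℝ)) := by
  refine Integrable.mono' (integrableOn_exp_neg_Ioi 0) ?_ ?_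
  · refine ContinuousOn.aestronglyMeasurable ?_ measurableSet_Ioi
    refine (Real.continuous_exp.comp continuous_neg).continuousOn.mul ?_
    exact continuousOn_const.div (continuousOn_const.add continuousOn_id)
      fun v (hv : 0 < v) => by positivity
  · filter_upwards [ae_restrict_mem measurableSet_Ioi] with v (hv : 0 < v)
    exact norm_exp_neg_mul_div_add_le hx.le hv

lemma strictMonoOn_mul_exp_mul_E1 :
    StrictMonoOn (fun x => x * Real.exp x * E1 x) (Set.Ioi 0) := by
  intro x (hx : 0 < x) y (hy : 0 < y) hxy
  have hpos : ∀ v ∈ Set.Ioi (0 : ℝ),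
      0 < Real.exp (-v) * (y / (y + v)) - Real.exp (-v) * (x / (x + v)) := by
    intro v (hv : 0 < v)
    rw [← mul_sub]
    refine mul_pos (Real.exp_pos _) (sub_pos.mpr ?_)
    rw [div_lt_div_iff₀ (by positivity) (by positivity)]
    nlinarith
  have hxint := integrableOn_exp_neg_mul_div_add hx
  have hyint := integrableOn_exp_neg_mul_div_add hy
  show x * Real.exp x * E1 x < y * Real.exp y * E1 y
  rw [← sub_pos, mul_exp_mul_E1_eq_integral hx, mul_exp_mul_E1_eq_integral hy,
    ← integral_sub hyint hxint, setIntegral_pos_iff_support_of_nonneg_ae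
      (ae_restrict_of_forall_mem measurableSet_Ioi fun v hv => (hpos v hv).le) (hyint.sub hxint),
    Set.inter_eq_right.mpr fun v hv => Function.mem_support.mpr (hpos v hv).ne']
  simp

lemma tendsto_mul_exp_mul_E1_nhdsGT_zero :
    Tendsto (fun x => x * Real.exp x * E1 x) (𝓝[>] 0) (𝓝 0) := by
  have hrepr : ∀ᶠ x in 𝓝[>] (0 : ℝ), x * Real.exp x * E1 x =
      ∫ v in Set.Ioi (0 : ℝ), Real.exp (-v) * (x / (x + v)) :=
    eventually_nhdsWithin_of_forall fun x hx => mul_exp_mul_E1_eq_integral hx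
  refine Tendsto.congr' (EventuallyEq.symm hrepr) ?_
  have hlim := tendsto_integral_filter_of_dominated_convergence
    (μ := volume.restrict (Set.Ioi (0 : ℝ))) (l := 𝓝[>] (0 : ℝ))
    (F := fun x v => Real.exp (-v) * (x / (x + v))) (f := fun _ => 0)
    (fun v => Real.exp (-v))
    (eventually_nhdsWithin_of_forall fun x (hx : 0 < x) =>
      (integrableOn_exp_neg_mul_div_add hx).aestronglyMeasurable)
    (eventually_nhdsWithin_of_forall fun x (hx : 0 < x) =>
      ae_restrict_of_forall_mem measurableSet_Ioi fun v (hv : 0 < v) =>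
        norm_exp_neg_mul_div_add_le hx.le hv)
    (integrableOn_exp_neg_Ioi 0)
    (ae_restrict_of_forall_mem measurableSet_Ioi fun v (hv : 0 < v) => by
      have hcont : ContinuousAt (fun x => Real.exp (-v) * (x / (x + v))) 0 :=
        continuousAt_const.mul (continuousAt_id.div (continuousAt_id.add continuousAt_const)
          (by simpa using hv.ne'))
      simpa using hcont.tendsto.mono_left nhdsWithin_le_nhds)
  simpa using hlim

theorem VG_mono_tendsto (Θ α s P ν : ℝ) (hΘ : 0 < Θ) (hα : 0 < α) (hs : 0 < s)
    (hP : 0 < P) (hν : 0 < ν) :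
    StrictMonoOn
      (fun τ : ℝ => (Θ * α / s) * P *
        (ν * Real.exp ν * E1 ν -
          ν * Real.exp (-s * α * τ) * Real.exp (ν * Real.exp (-s * α * τ)) *
            E1 (ν * Real.exp (-s * α * τ)))) (Set.Ici 0) ∧
    Tendsto
      (fun τ : ℝ => (Θ * α / s) * P *
        (ν * Real.exp ν * E1 ν -
          ν * Real.exp (-s * α * τ) * Real.exp (ν * Real.exp (-s * α * τ)) *
            E1 (ν * Real.exp (-s * α * τ)))) atTop
      (nhds ((Θ * α / s) * P * (ν * Real.exp ν * E1 ν))) := by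
  have hsα : 0 < s * α := mul_pos hs hα
  have hC : 0 < Θ * α / s * P := by positivity
  set X : ℝ → ℝ := fun τ => ν * Real.exp (-s * α * τ)
  have hX_pos : ∀ τ, 0 < X τ := fun τ => by positivity
  have hX_anti : StrictAnti X := fun a b hab => by
    have : -s * α * b < -s * α * a := by nlinarith
    exact mul_lt_mul_of_pos_left (Real.exp_lt_exp.mpr this) hν
  have hX_lim : Tendsto X atTop (𝓝[>] 0) := by
    refine tendsto_nhdsWithin_iff.mpr ⟨?_, Eventually.of_forall hX_pos⟩
    have hexp : Tendsto (fun τ => -s * α * τ) atTop atBot := by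
      simpa [neg_mul, Function.comp_def] using
        tendsto_neg_atTop_atBot.comp (tendsto_id.const_mul_atTop hsα)
    simpa [X] using (Real.tendsto_exp_atBot.comp hexp).const_mul ν
  constructor
  · intro a _ b _ hab
    exact mul_lt_mul_of_pos_left (sub_lt_sub_left (strictMonoOn_mul_exp_mul_E1
      (hX_pos b) (hX_pos a) (hX_anti hab)) _) hC
  · have hlim := ((tendsto_mul_exp_mul_E1_nhdsGT_zero.comp hX_lim).const_sub
      (ν * Real.exp ν * E1 ν)).const_mul (Θ * α / s * P)
    rwa [sub_zero] at hlim
end
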